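/- arXiv:2404.15722 — 7 statements merged into one kernel-verified Lean document; each statement's English description precedes it below -/
import Mathlib

section
/- Under the stated assumptions with ε_ν normally distributed with mean 0 and variance σ_ν², the variance of Z, defined as Var(Z) = E[|Z|²] − |E[Z]|², equals (1 − exp(−σ_ν²))·z² + σ_z². -/
/-!
Since `‖exp(iθ)‖ = 1`, the second moment is `E[(z + ε_z)²] = z² + σ_z²`. By independence
`E[Z] = E[z + ε_z] · E[exp(i(ν + ε_ν))] = z · exp(iν) · φ(1)`, where `φ(t) = exp(-σ_ν² t² / 2)` is
the characteristic function of `N(0, σ_ν²)`; hence `‖E[Z]‖² = z² exp(-σ_ν²)`.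
-/

open MeasureTheory ProbabilityTheory Complex

lemma integral_cexp_I_mul_add_gaussianReal (ν m : ℝ) (v : NNReal) :
    ∫ x, cexp (I * ((ν + x : ℝ) : ℂ)) ∂gaussianReal m v
      = cexp (I * ((ν + m : ℝ) : ℂ)) * Real.exp (-v / 2) :=
  calc ∫ x, cexp (I * ((ν + x : ℝ) : ℂ)) ∂gaussianReal m v
      = ∫ x, cexp (I * ν) * cexp ((1 : ℝ) * x * I) ∂gaussianReal m v := by
        congr 1 with x
        rw [← Complex.exp_add]
        push_cast
        ring_nf
    _ = cexp (I * ν) * charFun (gaussianReal m v) 1 := by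
        rw [integral_const_mul, charFun_apply_real]
    _ = cexp (I * ((ν + m : ℝ) : ℂ)) * Real.exp (-v / 2) := by
        rw [charFun_gaussianReal, Complex.ofReal_exp, ← Complex.exp_add, ← Complex.exp_add]
        congr 1
        push_cast
        ring

lemma norm_ofReal_mul_cexp_I_mul (a θ : ℝ) : ‖(a : ℂ) * cexp (I * θ)‖ = |a| := by
  rw [norm_mul, norm_real, mul_comm I, norm_exp_ofReal_mul_I, mul_one, Real.norm_eq_abs]

lemma integral_const_add_sq {Ω : Type*} [MeasurableSpace Ω] {μ : Measure Ω}
    [IsProbabilityMeasure μ] (a : ℝ) {X : Ω → ℝ} (hX : Integrable X μ)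
    (hX2 : Integrable (fun ω => X ω ^ 2) μ) (hX0 : ∫ ω, X ω ∂μ = 0) :
    ∫ ω, (a + X ω) ^ 2 ∂μ = a ^ 2 + ∫ ω, X ω ^ 2 ∂μ := by
  have hlin : Integrable (fun ω => a ^ 2 + 2 * a * X ω) μ :=
    (integrable_const _).add (hX.const_mul _)
  have hexpand : ∀ ω, (a + X ω) ^ 2 = (a ^ 2 + 2 * a * X ω) + X ω ^ 2 := fun ω => by ring
  simp_rw [hexpand]
  rw [integral_add hlin hX2, integral_add (integrable_const _) (hX.const_mul _),
    integral_const_mul, hX0]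
  simp

/-- Corollary (variance, Gaussian phase noise): if `ε_ν ~ N(0, σ_ν²)`, then
`Var(Z) = E[|Z|²] − |E[Z]|² = (1 − exp(−σ_ν²))·z² + σ_z²` for
`Z = (z + ε_z)·exp(i(ν + ε_ν))`. -/
theorem variance_of_noisy_phasor_gaussian
    {Ω : Type*} [MeasurableSpace Ω] (μ : Measure Ω) [IsProbabilityMeasure μ]
    (z ν σz : ℝ) (σν2 : NNReal) (εz εν : Ω → ℝ)
    (hmz : Measurable εz) (hmν : Measurable εν)
    (hindep : IndepFun εz εν μ)
    (hiz : Integrable εz μ)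
    (hiz2 : Integrable (fun ω => (εz ω) ^ 2) μ)
    (hEz : ∫ ω, εz ω ∂μ = 0)
    (hEz2 : ∫ ω, (εz ω) ^ 2 ∂μ = σz ^ 2)
    (hgauss : Measure.map εν μ = gaussianReal 0 σν2) :
    (∫ ω, ‖(((z + εz ω : ℝ) : ℂ)
          * Complex.exp (Complex.I * ((ν + εν ω : ℝ) : ℂ)))‖ ^ 2 ∂μ)
      - ‖(∫ ω, ((z + εz ω : ℝ) : ℂ)
          * Complex.exp (Complex.I * ((ν + εν ω : ℝ) : ℂ)) ∂μ)‖ ^ 2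
      = (1 - Real.exp (-(σν2 : ℝ))) * z ^ 2 + σz ^ 2 := by
  have hsecond : ∫ ω, ‖((z + εz ω : ℝ) : ℂ) * cexp (I * ((ν + εν ω : ℝ) : ℂ))‖ ^ 2 ∂μ
      = z ^ 2 + σz ^ 2 := by
    simp_rw [norm_ofReal_mul_cexp_I_mul, sq_abs]
    rw [integral_const_add_sq z hiz hiz2 hEz, hEz2]
  have hamplitude : ∫ ω, ((z + εz ω : ℝ) : ℂ) ∂μ = z := by
    rw [integral_complex_ofReal, integral_add (integrable_const z) hiz, hEz]
    simp
  have hphase : ∫ ω, cexp (I * ((ν + εν ω : ℝ) : ℂ)) ∂μ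
      = cexp (I * ν) * Real.exp (-σν2 / 2) := by
    rw [← integral_map (φ := εν) (f := fun x : ℝ => cexp (I * ((ν + x : ℝ) : ℂ)))
      hmν.aemeasurable (by fun_prop), hgauss, integral_cexp_I_mul_add_gaussianReal, add_zero]
  have hfirst : ∫ ω, ((z + εz ω : ℝ) : ℂ) * cexp (I * ((ν + εν ω : ℝ) : ℂ)) ∂μ
      = z * (cexp (I * ν) * Real.exp (-σν2 / 2)) := by
    rw [hindep.integral_fun_comp_mul_comp (f := fun x : ℝ => ((z + x : ℝ) : ℂ))
      (g := fun y : ℝ => cexp (I * ((ν + y : ℝ) : ℂ))) hmz.aemeasurable hmν.aemeasurable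
      (by fun_prop) (by fun_prop), hamplitude, hphase]
  rw [hsecond, hfirst, ← mul_assoc, mul_right_comm, ← ofReal_mul, norm_ofReal_mul_cexp_I_mul,
    sq_abs, mul_pow, ← Real.exp_nat_mul]
  ring_nf
end

section
/- Under the stated assumptions with ε_ν normally distributed with mean 0 and variance σ_ν², the pseudo-variance of Z, defined as PVar(Z) = E[Z²] − (E[Z])², equals exp(2iν)·((z² + σ_z²)·exp(−2σ_ν²) − z²·exp(−σ_ν²)). -/
open MeasureTheory ProbabilityTheory Complex

open Real in
lemma gauss_cexp (v : NNReal) (t : ℝ) :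
    ∫ x : ℝ, Complex.exp ((t : ℂ) * (x : ℂ) * Complex.I) ∂(gaussianReal 0 v)
      = ((Real.exp (-(t ^ 2 * (v : ℝ)) / 2) : ℝ) : ℂ) := by
  by_cases hv : v = 0
  · subst hv
    simp [gaussianReal_zero_var, integral_dirac]
  · have hv' : (0:ℝ) < v := NNReal.coe_pos.mpr (pos_iff_ne_zero.mpr hv)
    rw [gaussianReal_of_var_ne_zero 0 hv]
    have hmeas : Measurable fun x => (gaussianPDFReal 0 v x).toNNReal :=
      (measurable_gaussianPDFReal 0 v).real_toNNReal
    have heq : gaussianPDF 0 v = fun x => ((gaussianPDFReal 0 v x).toNNReal : ENNReal) := rfl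
    rw [heq, integral_withDensity_eq_integral_smul hmeas]
    have hnn := gaussianPDFReal_nonneg 0 v
    simp_rw [NNReal.smul_def, Real.coe_toNNReal _ (hnn _), gaussianPDFReal,
      sub_zero, Complex.real_smul, Complex.ofReal_mul, mul_assoc, Complex.ofReal_exp,
      ← Complex.exp_add]
    rw [integral_const_mul]
    have hvne : ((v:ℝ) : ℂ) ≠ 0 := by
      simp only [ne_eq, Complex.ofReal_eq_zero]
      positivity
    have hb : ((-(1 / (2 * (v:ℝ)) : ℝ) : ℝ) : ℂ).re < 0 := by
      simp only [Complex.ofReal_re]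
      norm_num
      positivity
    have key := integral_cexp_quadratic (b := ((-(1 / (2 * (v:ℝ)) : ℝ) : ℝ) : ℂ)) hb ((t:ℂ) * Complex.I) 0
    have hvr : (v:ℝ) ≠ 0 := hv'.ne'
    have heq2 : ∀ x : ℝ, ((-x ^ 2 / (2 * (v:ℝ)) : ℝ) : ℂ) + (t:ℂ) * ((x:ℂ) * Complex.I)
        = ((-(1 / (2 * (v:ℝ)) : ℝ) : ℝ) : ℂ) * (x:ℂ) ^ 2 + ((t:ℂ) * Complex.I) * (x:ℂ) + 0 := by
      intro x
      have h : (-x ^ 2 / (2 * (v:ℝ)) : ℝ) = (-(1 / (2 * (v:ℝ)) : ℝ) : ℝ) * x ^ 2 := by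
        field_simp
      rw [h]
      push_cast
      ring
    simp_rw [heq2]
    rw [key]
    have h1 : ((π : ℂ) / -((-(1 / (2 * (v:ℝ)) : ℝ) : ℝ) : ℂ)) = ((2 * (π * (v:ℝ)) : ℝ) : ℂ) := by
      push_cast
      field_simp
    rw [h1]
    have h2 : ((2 * (π * (v:ℝ)) : ℝ) : ℂ) ^ (1/2 : ℂ) = ((Real.sqrt (2 * (π * (v:ℝ))) : ℝ) : ℂ) := by
      rw [Real.sqrt_eq_rpow, Complex.ofReal_cpow (by positivity)]
      norm_num
    rw [h2]
    have h3 : (0 : ℂ) - ((t:ℂ) * Complex.I) ^ 2 / (4 * ((-(1 / (2 * (v:ℝ)) : ℝ) : ℝ) : ℂ))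
        = ((-(t ^ 2 * (v:ℝ)) / 2 : ℝ) : ℂ) := by
      push_cast
      rw [mul_pow, Complex.I_sq]
      field_simp
      ring
    rw [h3]
    have hs : ((Real.sqrt (2 * (π * (v:ℝ))) : ℝ) : ℂ) ≠ 0 := by
      simp only [ne_eq, Complex.ofReal_eq_zero]
      positivity
    rw [← mul_assoc, Complex.ofReal_inv, inv_mul_cancel₀ hs, one_mul]

lemma integral_complex_ofReal' {α : Type*} [MeasurableSpace α] {μ : Measure α} {f : α → ℝ} :
    ∫ x, ((f x : ℝ) : ℂ) ∂μ = ((∫ x, f x ∂μ : ℝ) : ℂ) := integral_ofReal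


/-- Corollary (pseudo-variance, Gaussian phase noise): if `ε_ν ~ N(0, σ_ν²)`, then
`PVar(Z) = E[Z²] − (E[Z])² = exp(2iν)·((z² + σ_z²)·exp(−2σ_ν²) − z²·exp(−σ_ν²))` for
`Z = (z + ε_z)·exp(i(ν + ε_ν))`. -/
theorem pseudoVariance_of_noisy_phasor_gaussian
    {Ω : Type*} [MeasurableSpace Ω] (μ : Measure Ω) [IsProbabilityMeasure μ]
    (z ν σz : ℝ) (σν2 : NNReal) (εz εν : Ω → ℝ)
    (hmz : Measurable εz) (hmν : Measurable εν)
    (hindep : IndepFun εz εν μ)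
    (hiz : Integrable εz μ)
    (hiz2 : Integrable (fun ω => (εz ω) ^ 2) μ)
    (hEz : ∫ ω, εz ω ∂μ = 0)
    (hEz2 : ∫ ω, (εz ω) ^ 2 ∂μ = σz ^ 2)
    (hgauss : Measure.map εν μ = gaussianReal 0 σν2) :
    (∫ ω, (((z + εz ω : ℝ) : ℂ) * Complex.exp (Complex.I * ((ν + εν ω : ℝ) : ℂ))) ^ 2 ∂μ)
      - (∫ ω, ((z + εz ω : ℝ) : ℂ) * Complex.exp (Complex.I * ((ν + εν ω : ℝ) : ℂ)) ∂μ) ^ 2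
      = Complex.exp (2 * Complex.I * (ν : ℂ))
          * ((((z ^ 2 + σz ^ 2 : ℝ)) : ℂ) * ((Real.exp (-2 * (σν2 : ℝ)) : ℝ) : ℂ)
             - ((z : ℂ) ^ 2) * ((Real.exp (-(σν2 : ℝ)) : ℝ) : ℂ)) := by
  have hpair : AEMeasurable (fun ω => (εz ω, εν ω)) μ := (hmz.prodMk hmν).aemeasurable
  have hT : Measure.map (fun ω => (εz ω, εν ω)) μ
      = (Measure.map εz μ).prod (Measure.map εν μ) :=
    (indepFun_iff_map_prod_eq_prod_map_map hmz.aemeasurable hmν.aemeasurable).mp hindep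
  -- first moment of the amplitude
  have hA1 : ∫ x, ((z + x : ℝ) : ℂ) ∂(Measure.map εz μ) = (z : ℂ) := by
    rw [integral_map hmz.aemeasurable
      (Continuous.aestronglyMeasurable (by continuity))]
    rw [show (fun ω => ((z + εz ω : ℝ) : ℂ)) = fun ω => ((z + εz ω : ℝ) : ℂ) from rfl]
    rw [integral_complex_ofReal']
    rw [integral_add (integrable_const z) hiz, hEz, integral_const]
    simp
  -- second moment of the amplitude
  have hA2 : ∫ x, ((z + x : ℝ) : ℂ) ^ 2 ∂(Measure.map εz μ) = ((z ^ 2 + σz ^ 2 : ℝ) : ℂ) := by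
    rw [integral_map hmz.aemeasurable
      (Continuous.aestronglyMeasurable (by continuity))]
    have : ∀ ω, ((z + εz ω : ℝ) : ℂ) ^ 2 = (((z + εz ω) ^ 2 : ℝ) : ℂ) := by
      intro ω; push_cast; ring
    simp_rw [this]
    rw [integral_complex_ofReal']
    have h2 : ∀ ω, (z + εz ω) ^ 2 = z ^ 2 + (2 * z) * εz ω + εz ω ^ 2 := by
      intro ω; ring
    simp_rw [h2]
    have i1 : Integrable (fun ω => z ^ 2 + 2 * z * εz ω) μ :=
      (integrable_const _).add (hiz.const_mul _)
    rw [integral_add i1 hiz2, integral_add (integrable_const _) (hiz.const_mul _),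
      integral_const, integral_const_mul, hEz, hEz2]
    simp
  -- phase factors
  have hP1 : ∫ y, Complex.exp (Complex.I * ((ν + y : ℝ) : ℂ)) ∂(Measure.map εν μ)
      = Complex.exp (Complex.I * (ν : ℂ)) * ((Real.exp (-((1:ℝ) ^ 2 * (σν2:ℝ)) / 2) : ℝ) : ℂ) := by
    rw [hgauss]
    have : ∀ y : ℝ, Complex.exp (Complex.I * ((ν + y : ℝ) : ℂ))
        = Complex.exp (Complex.I * (ν : ℂ)) * Complex.exp (((1:ℝ):ℂ) * (y:ℂ) * Complex.I) := by
      intro y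
      rw [← Complex.exp_add]
      push_cast
      ring_nf
    simp_rw [this]
    rw [integral_const_mul, gauss_cexp]
  have hP2 : ∫ y, Complex.exp (Complex.I * ((ν + y : ℝ) : ℂ)) ^ 2 ∂(Measure.map εν μ)
      = Complex.exp (2 * Complex.I * (ν : ℂ))
        * ((Real.exp (-((2:ℝ) ^ 2 * (σν2:ℝ)) / 2) : ℝ) : ℂ) := by
    rw [hgauss]
    have : ∀ y : ℝ, Complex.exp (Complex.I * ((ν + y : ℝ) : ℂ)) ^ 2
        = Complex.exp (2 * Complex.I * (ν : ℂ)) * Complex.exp (((2:ℝ):ℂ) * (y:ℂ) * Complex.I) := by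
      intro y
      rw [sq, ← Complex.exp_add, ← Complex.exp_add]
      push_cast
      ring_nf
    simp_rw [this]
    rw [integral_const_mul, gauss_cexp]
  -- split the two expectations via independence
  have hE1 : (∫ ω, ((z + εz ω : ℝ) : ℂ) * Complex.exp (Complex.I * ((ν + εν ω : ℝ) : ℂ)) ∂μ)
      = (∫ x, ((z + x : ℝ) : ℂ) ∂(Measure.map εz μ))
        * ∫ y, Complex.exp (Complex.I * ((ν + y : ℝ) : ℂ)) ∂(Measure.map εν μ) := by
    rw [← integral_prod_mul, ← hT,
      integral_map hpair (Continuous.aestronglyMeasurable (by continuity))]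
  have hE2 : (∫ ω, (((z + εz ω : ℝ) : ℂ) * Complex.exp (Complex.I * ((ν + εν ω : ℝ) : ℂ))) ^ 2 ∂μ)
      = (∫ x, ((z + x : ℝ) : ℂ) ^ 2 ∂(Measure.map εz μ))
        * ∫ y, Complex.exp (Complex.I * ((ν + y : ℝ) : ℂ)) ^ 2 ∂(Measure.map εν μ) := by
    rw [← integral_prod_mul, ← hT,
      integral_map hpair (Continuous.aestronglyMeasurable (by continuity))]
    simp_rw [mul_pow]
  rw [hE1, hE2, hA1, hA2, hP1, hP2]
  have e1 : (-((2:ℝ) ^ 2 * (σν2:ℝ)) / 2) = -2 * (σν2:ℝ) := by ring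
  have e2 : Complex.exp (Complex.I * (ν : ℂ)) ^ 2 = Complex.exp (2 * Complex.I * (ν : ℂ)) := by
    rw [sq, ← Complex.exp_add]; ring_nf
  have e3 : (((Real.exp (-((1:ℝ) ^ 2 * (σν2:ℝ)) / 2) : ℝ) : ℂ)) ^ 2
      = ((Real.exp (-(σν2:ℝ)) : ℝ) : ℂ) := by
    rw [← Complex.ofReal_pow, sq, ← Real.exp_add]
    norm_num
  rw [e1, mul_pow, mul_pow, e2, e3]
  ring
end

section
/- Under the stated assumptions, the pseudo-variance of Z, defined as PVar(Z) = E[Z²] − (E[Z])², equals exp(2i(θ + φ))·((i₀² + σ_i²)·c_{ε_θ}(2)·c_{ε_φ}(2) − i₀²·c_{ε_θ}(1)²·c_{ε_φ}(1)²). -/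
/-!
Factor `Z^n = exp(i n (θ + φ)) · (i₀ + ε_i)^n · exp(i n ε_θ) · exp(i n ε_φ)`; by mutual
independence the expectation of the product of the three random factors is the product of their
expectations, so `E[Z^n] = exp(i n (θ + φ)) · E[(i₀ + ε_i)^n] · c_{ε_θ}(n) · c_{ε_φ}(n)`.
Take `n = 1, 2` and insert `E[i₀ + ε_i] = i₀`, `E[(i₀ + ε_i)²] = i₀² + σ_i²`.
-/

open MeasureTheory ProbabilityTheory Complex

lemma ProbabilityTheory.iIndepFun.integral_comp_mul_comp_mul_comp {Ω β 𝕜 : Type*} [RCLike 𝕜]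
    [MeasurableSpace Ω] [MeasurableSpace β] {μ : Measure Ω} {X Y Z : Ω → β}
    (hXYZ : iIndepFun ![X, Y, Z] μ)
    (hX : AEMeasurable X μ) (hY : AEMeasurable Y μ) (hZ : AEMeasurable Z μ) {f g h : β → 𝕜}
    (hf : AEStronglyMeasurable f (μ.map X)) (hg : AEStronglyMeasurable g (μ.map Y))
    (hh : AEStronglyMeasurable h (μ.map Z)) :
    ∫ ω, f (X ω) * g (Y ω) * h (Z ω) ∂μ
      = (∫ ω, f (X ω) ∂μ) * (∫ ω, g (Y ω) ∂μ) * ∫ ω, h (Z ω) ∂μ := by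
  have := hXYZ.integral_fun_prod_comp (f := ![f, g, h])
    (fun i => by fin_cases i <;> assumption) (fun i => by fin_cases i <;> assumption)
  simpa [Fin.prod_univ_three, mul_assoc] using this

lemma phasor_pow_eq (a c x y : ℝ) (n : ℕ) :
    ((a : ℂ) * exp (I * ((c + x + y : ℝ) : ℂ))) ^ n
      = exp (n * I * c) * (((a ^ n : ℝ) : ℂ) * exp (I * ((n : ℝ) : ℂ) * x)
        * exp (I * ((n : ℝ) : ℂ) * y)) := by
  rw [mul_pow, ← exp_nat_mul]
  push_cast
  rw [show (n : ℂ) * (I * (c + x + y)) = n * I * c + I * n * x + I * n * y by ring, exp_add,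
    exp_add]
  ring

lemma integral_phasor_pow {Ω : Type*} [MeasurableSpace Ω] {μ : Measure Ω} {A X Y : Ω → ℝ}
    (hAXY : iIndepFun ![A, X, Y] μ)
    (hA : AEMeasurable A μ) (hX : AEMeasurable X μ) (hY : AEMeasurable Y μ) (a c : ℝ) (n : ℕ) :
    ∫ ω, (((a + A ω : ℝ) : ℂ) * exp (I * ((c + X ω + Y ω : ℝ) : ℂ))) ^ n ∂μ
      = exp (n * I * c) * ((∫ ω, (a + A ω) ^ n ∂μ : ℝ) : ℂ)
        * (∫ ω, exp (I * ((n : ℝ) : ℂ) * ((X ω : ℝ) : ℂ)) ∂μ)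
        * ∫ ω, exp (I * ((n : ℝ) : ℂ) * ((Y ω : ℝ) : ℂ)) ∂μ := by
  simp_rw [phasor_pow_eq]
  rw [integral_const_mul, hAXY.integral_comp_mul_comp_mul_comp
    (f := fun x : ℝ => (((a + x) ^ n : ℝ) : ℂ)) (g := fun x : ℝ => exp (I * ((n : ℝ) : ℂ) * x))
    (h := fun x : ℝ => exp (I * ((n : ℝ) : ℂ) * x)) hA hX hY
    (by fun_prop) (by fun_prop) (by fun_prop), integral_complex_ofReal]
  ring

section Moments

variable {Ω : Type*} [MeasurableSpace Ω] {μ : Measure Ω} [IsProbabilityMeasure μ]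

lemma integral_const_add {E : Type*} [NormedAddCommGroup E] [NormedSpace ℝ E] [CompleteSpace E]
    {A : Ω → E} (a : E) (hA : Integrable A μ) :
    ∫ ω, (a + A ω) ∂μ = a + ∫ ω, A ω ∂μ := by
  rw [integral_add (integrable_const a) hA, integral_const, probReal_univ, one_smul]

lemma integral_const_add_sq_s8 {A : Ω → ℝ} (a : ℝ) (hA : Integrable A μ)
    (hA2 : Integrable (fun ω => A ω ^ 2) μ) :
    ∫ ω, (a + A ω) ^ 2 ∂μ = a ^ 2 + 2 * a * ∫ ω, A ω ∂μ + ∫ ω, A ω ^ 2 ∂μ := by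
  have hexpand : (fun ω => (a + A ω) ^ 2) = fun ω => a ^ 2 + (2 * a * A ω + A ω ^ 2) := by
    ext ω; ring
  rw [hexpand, integral_const_add (A := fun ω => 2 * a * A ω + A ω ^ 2) _
    ((hA.const_mul _).add hA2), integral_add (hA.const_mul _) hA2, integral_const_mul, add_assoc]

end Moments

theorem pseudoVariance_of_noisy_current_phasor_general
    {Ω : Type*} [MeasurableSpace Ω] (μ : Measure Ω) [IsProbabilityMeasure μ]
    (i₀ θ φ σi : ℝ) (εi εθ εφ : Ω → ℝ)
    (hmi : Measurable εi) (hmθ : Measurable εθ) (hmφ : Measurable εφ)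
    (hindep : iIndepFun
      ![εi, εθ, εφ] μ)
    (hii : Integrable εi μ)
    (hii2 : Integrable (fun ω => (εi ω) ^ 2) μ)
    (hEi : ∫ ω, εi ω ∂μ = 0)
    (hEi2 : ∫ ω, (εi ω) ^ 2 ∂μ = σi ^ 2) :
    (∫ ω, (((i₀ + εi ω : ℝ) : ℂ)
          * Complex.exp (Complex.I * ((θ + φ + εθ ω + εφ ω : ℝ) : ℂ))) ^ 2 ∂μ)
      - (∫ ω, ((i₀ + εi ω : ℝ) : ℂ)
          * Complex.exp (Complex.I * ((θ + φ + εθ ω + εφ ω : ℝ) : ℂ)) ∂μ) ^ 2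
      = Complex.exp (2 * Complex.I * ((θ + φ : ℝ) : ℂ))
          * ((((i₀ ^ 2 + σi ^ 2 : ℝ)) : ℂ)
                * (∫ ω, Complex.exp (Complex.I * ((2 : ℝ) : ℂ) * ((εθ ω : ℝ) : ℂ)) ∂μ)
                * (∫ ω, Complex.exp (Complex.I * ((2 : ℝ) : ℂ) * ((εφ ω : ℝ) : ℂ)) ∂μ)
             - ((i₀ : ℂ) ^ 2)
                * (∫ ω, Complex.exp (Complex.I * ((1 : ℝ) : ℂ) * ((εθ ω : ℝ) : ℂ)) ∂μ) ^ 2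
                * (∫ ω, Complex.exp (Complex.I * ((1 : ℝ) : ℂ) * ((εφ ω : ℝ) : ℂ)) ∂μ) ^ 2) := by
  have hmoment (n : ℕ) := integral_phasor_pow hindep hmi.aemeasurable hmθ.aemeasurable
    hmφ.aemeasurable i₀ (θ + φ) n
  have hmean := hmoment 1
  have hsecond := hmoment 2
  simp only [pow_one, one_mul, Nat.cast_one, Nat.cast_ofNat] at hmean hsecond
  rw [hsecond, hmean, integral_const_add i₀ hii, integral_const_add_sq_s8 i₀ hii hii2, hEi, hEi2,
    show exp (2 * I * ((θ + φ : ℝ) : ℂ)) = exp (I * ((θ + φ : ℝ) : ℂ)) ^ 2 by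
      rw [← exp_nat_mul]; ring_nf]
  push_cast
  ring

/-- Pseudo-variance of the EM current phasor:
`PVar(Z) = E[Z²] − (E[Z])²
= exp(2i(θ+φ))·((i₀² + σ_i²)·c_{ε_θ}(2)·c_{ε_φ}(2) − i₀²·c_{ε_θ}(1)²·c_{ε_φ}(1)²)` for
`Z = (i₀ + ε_i)·exp(i(θ + φ + ε_θ + ε_φ))` with `ε_i, ε_θ, ε_φ` mutually independent,
`E[ε_i] = 0`, `E[ε_i²] = σ_i² < ∞`, `E[ε_θ] = 0`, `E[ε_φ] = 0`. -/
theorem pseudoVariance_of_noisy_current_phasor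
    {Ω : Type*} [MeasurableSpace Ω] (μ : Measure Ω) [IsProbabilityMeasure μ]
    (i₀ θ φ σi : ℝ) (εi εθ εφ : Ω → ℝ)
    (hmi : Measurable εi) (hmθ : Measurable εθ) (hmφ : Measurable εφ)
    (hindep : iIndepFun
      ![εi, εθ, εφ] μ)
    (hii : Integrable εi μ)
    (hii2 : Integrable (fun ω => (εi ω) ^ 2) μ)
    (hEi : ∫ ω, εi ω ∂μ = 0)
    (hEi2 : ∫ ω, (εi ω) ^ 2 ∂μ = σi ^ 2)
    (hiθ : Integrable εθ μ) (hEθ : ∫ ω, εθ ω ∂μ = 0)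
    (hiφ : Integrable εφ μ) (hEφ : ∫ ω, εφ ω ∂μ = 0) :
    (∫ ω, (((i₀ + εi ω : ℝ) : ℂ)
          * Complex.exp (Complex.I * ((θ + φ + εθ ω + εφ ω : ℝ) : ℂ))) ^ 2 ∂μ)
      - (∫ ω, ((i₀ + εi ω : ℝ) : ℂ)
          * Complex.exp (Complex.I * ((θ + φ + εθ ω + εφ ω : ℝ) : ℂ)) ∂μ) ^ 2
      = Complex.exp (2 * Complex.I * ((θ + φ : ℝ) : ℂ))
          * ((((i₀ ^ 2 + σi ^ 2 : ℝ)) : ℂ)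
                * (∫ ω, Complex.exp (Complex.I * ((2 : ℝ) : ℂ) * ((εθ ω : ℝ) : ℂ)) ∂μ)
                * (∫ ω, Complex.exp (Complex.I * ((2 : ℝ) : ℂ) * ((εφ ω : ℝ) : ℂ)) ∂μ)
             - ((i₀ : ℂ) ^ 2)
                * (∫ ω, Complex.exp (Complex.I * ((1 : ℝ) : ℂ) * ((εθ ω : ℝ) : ℂ)) ∂μ) ^ 2
                * (∫ ω, Complex.exp (Complex.I * ((1 : ℝ) : ℂ) * ((εφ ω : ℝ) : ℂ)) ∂μ) ^ 2) :=
  pseudoVariance_of_noisy_current_phasor_general μ i₀ θ φ σi εi εθ εφ hmi hmθ hmφ hindep hii hii2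
    hEi hEi2
end

section
/- The matrix identity J̄·Σ̄·J̄ᴴ = 2Ḡ holds. -/
open Matrix

/-- Entrywise complex conjugation of a matrix. -/
noncomputable def cconj {m n : Type*} (B : Matrix m n ℂ) : Matrix m n ℂ :=
  B.map (starRingEnd ℂ)

/-- The augmented matrix `aug(B₁,B₂) = [[B₁, B₂],[B₂*, B₁*]]`. -/
noncomputable def aug {m n : Type*} (B₁ B₂ : Matrix m n ℂ) :
    Matrix (m ⊕ m) (n ⊕ n) ℂ :=
  Matrix.fromBlocks B₁ B₂ (cconj B₂) (cconj B₁)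

/-- The augmented vector `v̄ = (v, v*)`. -/
noncomputable def augVec {n : Type*} (v : n → ℂ) : (n ⊕ n) → ℂ :=
  Sum.elim v (fun i => starRingEnd ℂ (v i))

lemma cconj_eq {m n : Type*} (A : Matrix m n ℂ) : cconj A = Aᴴᵀ := by
  ext i j; simp [cconj]

lemma cconj_mul {m n p : Type*} [Fintype n] (A : Matrix m n ℂ) (B : Matrix n p ℂ) :
    cconj (A * B) = cconj A * cconj B := by
  simp [cconj, Matrix.map_mul]

lemma cconj_conjTranspose {m n : Type*} (A : Matrix m n ℂ) : (cconj A)ᴴ = Aᵀ := by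
  ext i j; simp [cconj]

lemma conjTranspose_cconj {m n : Type*} (A : Matrix m n ℂ) : cconj (Aᴴ) = Aᵀ := by
  ext i j; simp [cconj]

lemma cconj_transpose {m n : Type*} (A : Matrix m n ℂ) : (cconj A)ᵀ = Aᴴ := by
  ext i j; simp [cconj]

lemma transpose_cconj {m n : Type*} (A : Matrix m n ℂ) : cconj (Aᵀ) = Aᴴ := by
  ext i j; simp [cconj]

lemma cconj_inv {n : Type*} [Fintype n] [DecidableEq n] (A : Matrix n n ℂ) :
    cconj (A⁻¹) = (cconj A)⁻¹ := by
  rw [cconj_eq, cconj_eq, Matrix.conjTranspose_nonsing_inv, Matrix.transpose_nonsing_inv]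

lemma cconj_sub {m n : Type*} (A B : Matrix m n ℂ) : cconj (A - B) = cconj A - cconj B := by
  ext i j; simp [cconj]

lemma cconj_det_isUnit {n : Type*} [Fintype n] [DecidableEq n] {A : Matrix n n ℂ}
    (h : IsUnit A.det) : IsUnit (cconj A).det := by
  have : (cconj A).det = (starRingEnd ℂ) A.det := (RingHom.map_det (starRingEnd ℂ) A).symm
  rw [this]
  exact h.map (starRingEnd ℂ)

lemma cconj_add {m n : Type*} (A B : Matrix m n ℂ) : cconj (A + B) = cconj A + cconj B := by
  ext i j; simp [cconj]

lemma cconj_cconj {m n : Type*} (A : Matrix m n ℂ) : cconj (cconj A) = A := by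
  ext i j; simp [cconj]

lemma cconj_smul_two {m n : Type*} (A : Matrix m n ℂ) : cconj ((2:ℂ) • A) = (2:ℂ) • cconj A := by
  ext i j; simp only [cconj, Matrix.map_apply, Matrix.smul_apply, smul_eq_mul, _root_.map_mul, Complex.conj_ofNat]

lemma aug_mul {m n p : Type*} [Fintype n] (A B : Matrix m n ℂ) (C E : Matrix n p ℂ) :
    aug A B * aug C E = aug (A * C + B * cconj E) (A * E + B * cconj C) := by
  simp only [aug, Matrix.fromBlocks_multiply]
  rw [cconj_add, cconj_add, cconj_mul, cconj_mul, cconj_mul, cconj_mul, cconj_cconj, cconj_cconj]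
  rw [add_comm (cconj B * C), add_comm (cconj B * E)]

lemma aug_conjTranspose {m n : Type*} (A B : Matrix m n ℂ) :
    (aug A B)ᴴ = aug Aᴴ Bᵀ := by
  simp only [aug, Matrix.fromBlocks_conjTranspose, cconj_conjTranspose,
    transpose_cconj, conjTranspose_cconj]

lemma aug_smul_two {m n : Type*} (A B : Matrix m n ℂ) :
    aug ((2:ℂ) • A) ((2:ℂ) • B) = (2:ℂ) • aug A B := by
  simp only [aug, cconj_smul_two, Matrix.fromBlocks_smul]

lemma cconj_neg {m n : Type*} (A : Matrix m n ℂ) : cconj (-A) = -cconj A := by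
  ext i j; simp [cconj]


/-- The matrix identity `J̄·Σ̄·J̄ᴴ = 2Ḡ`. -/
theorem augJ_mul_augSigma_mul_augJH_eq_two_augG
    (N K Q : ℕ) (hN : 0 < N) (hK : 0 < K) (hQ : 0 < Q)
    (D : Matrix (Fin K) (Fin N) ℂ) (C : Matrix (Fin Q) (Fin N) ℂ)
    (S₁ S₂ : Matrix (Fin K) (Fin K) ℂ)
    (hherm : S₁ᴴ = S₁) (hS₁ : IsUnit S₁.det) (hsym : S₂ᵀ = S₂)
    (W P : Matrix (Fin K) (Fin K) ℂ)
    (hW : W = S₂ * (cconj S₁)⁻¹)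
    (hP : P = cconj S₁ - S₂ᴴ * S₁⁻¹ * S₂)
    (hPinv : IsUnit P.det)
    (G₁ G₂ : Matrix (Fin N) (Fin N) ℂ)
    (hG₁ : G₁ = (2 : ℂ) • (Dᴴ * (cconj P)⁻¹ * D))
    (hG₂ : G₂ = (-2 : ℂ) • (Dᴴ * (cconj P)⁻¹ * W * cconj D)) :
    aug ((2 : ℂ) • (Dᴴ * (cconj P)⁻¹)) ((-2 : ℂ) • (Dᴴ * (cconj P)⁻¹ * W)) * aug S₁ S₂
        * (aug ((2 : ℂ) • (Dᴴ * (cconj P)⁻¹)) ((-2 : ℂ) • (Dᴴ * (cconj P)⁻¹ * W)))ᴴ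
      = (2 : ℂ) • aug G₁ G₂ := by
  have hS₁T : cconj S₁ = S₁ᵀ := by rw [cconj_eq, hherm]
  have hS₂H : S₂ᴴ = cconj S₂ := by rw [← transpose_cconj, hsym]
  have hdetS₁c : IsUnit (cconj S₁).det := cconj_det_isUnit hS₁
  have hdetPc : IsUnit (cconj P).det := cconj_det_isUnit hPinv
  have hWH : Wᴴ = (cconj S₁)⁻¹ * cconj S₂ := by
    rw [hW, Matrix.conjTranspose_mul, Matrix.conjTranspose_nonsing_inv,
      cconj_conjTranspose, ← hS₁T, hS₂H]
  have hWT : Wᵀ = S₁⁻¹ * S₂ := by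
    rw [hW, Matrix.transpose_mul, Matrix.transpose_nonsing_inv, cconj_transpose, hherm, hsym]
  have hPc : cconj P = S₁ - S₂ * ((cconj S₁)⁻¹ * cconj S₂) := by
    rw [hP, cconj_sub, cconj_cconj, cconj_mul, cconj_mul, conjTranspose_cconj, cconj_inv,
      hsym, Matrix.mul_assoc]
  have hPH : Pᴴ = P := by
    rw [hP]
    simp only [Matrix.conjTranspose_sub, Matrix.conjTranspose_mul,
      Matrix.conjTranspose_conjTranspose, Matrix.conjTranspose_nonsing_inv, hherm,
      cconj_conjTranspose, ← hS₁T, Matrix.mul_assoc]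
  have hPT : Pᵀ = cconj P := by rw [cconj_eq, hPH]
  have hcPH : (cconj P)ᴴ = cconj P := by rw [cconj_conjTranspose, hPT]
  have hcPT : (cconj P)ᵀ = P := by rw [cconj_transpose, hPH]
  subst hG₁ hG₂
  obtain ⟨E, hE⟩ : ∃ E' : Matrix (Fin N) (Fin K) ℂ, E' = Dᴴ * (cconj P)⁻¹ := ⟨_, rfl⟩
  rw [← hE]
  have hEH : Eᴴ = (cconj P)⁻¹ * D := by
    rw [hE, Matrix.conjTranspose_mul, Matrix.conjTranspose_nonsing_inv, hcPH,
      Matrix.conjTranspose_conjTranspose]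
  have hET : Eᵀ = P⁻¹ * cconj D := by
    rw [hE, Matrix.transpose_mul, Matrix.transpose_nonsing_inv, hcPT, ← cconj_eq]
  have h1 : W * cconj S₁ = S₂ := by
    rw [hW, Matrix.nonsing_inv_mul_cancel_right _ _ hdetS₁c]
  have key1 : S₁ - W * cconj S₂ - (S₂ - W * cconj S₁) * Wᴴ = cconj P := by
    rw [hWH, hPc, h1, sub_self, Matrix.zero_mul, sub_zero, hW, Matrix.mul_assoc]
  have key2 : S₂ - W * cconj S₁ - (S₁ - W * cconj S₂) * Wᵀ = -(W * P) := by
    rw [h1, sub_self, zero_sub, neg_inj]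
    calc (S₁ - W * cconj S₂) * Wᵀ
        = S₂ - W * (cconj S₂ * (S₁⁻¹ * S₂)) := by
          rw [hWT, Matrix.sub_mul, Matrix.mul_nonsing_inv_cancel_left _ _ hS₁,
            Matrix.mul_assoc]
      _ = W * P := by
          rw [hP, Matrix.mul_sub, h1, hS₂H]
          simp only [Matrix.mul_assoc]
  have hm2 : ∀ {a b : Type} (X : Matrix a b ℂ), (-2 : ℂ) • X = (2 : ℂ) • (-X) := by
    intro a b X; rw [neg_smul, ← smul_neg]
  rw [hm2, hm2, aug_smul_two, aug_smul_two]
  have hstar2 : (star (2:ℂ)) = 2 := by norm_num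
  rw [Matrix.conjTranspose_smul, hstar2, Matrix.smul_mul, Matrix.mul_smul, Matrix.smul_mul,
    smul_smul, smul_smul]
  congr 1
  rw [aug_conjTranspose, aug_mul, aug_mul]
  have eq1 : (E * S₁ + -(E * W) * cconj S₂) * Eᴴ
      + (E * S₂ + -(E * W) * cconj S₁) * cconj ((-(E * W))ᵀ) = E * D := by
    rw [Matrix.transpose_neg, cconj_neg, transpose_cconj, Matrix.conjTranspose_mul]
    calc (E * S₁ + -(E * W) * cconj S₂) * Eᴴ
        + (E * S₂ + -(E * W) * cconj S₁) * -(Wᴴ * Eᴴ)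
        = E * ((S₁ - W * cconj S₂ - (S₂ - W * cconj S₁) * Wᴴ) * Eᴴ) := by
          simp only [Matrix.neg_mul, Matrix.mul_neg, Matrix.sub_mul, Matrix.mul_sub,
            Matrix.add_mul, Matrix.mul_assoc]
          abel
      _ = E * (cconj P * Eᴴ) := by rw [key1]
      _ = E * D := by rw [hEH, Matrix.mul_nonsing_inv_cancel_left _ _ hdetPc]
  have eq2 : (E * S₁ + -(E * W) * cconj S₂) * (-(E * W))ᵀ
      + (E * S₂ + -(E * W) * cconj S₁) * cconj (Eᴴ) = -(E * W * cconj D) := by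
    rw [Matrix.transpose_neg, Matrix.transpose_mul, conjTranspose_cconj]
    calc (E * S₁ + -(E * W) * cconj S₂) * -(Wᵀ * Eᵀ)
        + (E * S₂ + -(E * W) * cconj S₁) * Eᵀ
        = E * ((S₂ - W * cconj S₁ - (S₁ - W * cconj S₂) * Wᵀ) * Eᵀ) := by
          simp only [Matrix.neg_mul, Matrix.mul_neg, Matrix.sub_mul, Matrix.mul_sub,
            Matrix.add_mul, Matrix.mul_assoc]
          abel
      _ = E * (-(W * P) * Eᵀ) := by rw [key2]
      _ = -(E * W * cconj D) := by
          rw [hET]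
          simp only [Matrix.neg_mul, Matrix.mul_neg, Matrix.mul_assoc,
            Matrix.mul_nonsing_inv_cancel_left _ _ hPinv]
  rw [eq1, eq2]
end

section
/- Assume A is invertible with inverse written in blocks A⁻¹ = [[F̄₁₁, F̄₁₂],[F̄₂₁, F̄₂₂]] where F̄₁₁ is 2N×2N. Then F̄₁₁·Ḡ·F̄₁₁ = F̄₁₁. -/
open Matrix

/-- If `A = [[Ḡ, C̄ᴴ],[C̄, O]]` is invertible with inverse blocks `F̄ᵢⱼ`, then
`F̄₁₁·Ḡ·F̄₁₁ = F̄₁₁`. -/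
theorem F11_G_F11_eq_F11
    (N K Q : ℕ) (hN : 0 < N) (hK : 0 < K) (hQ : 0 < Q)
    (D : Matrix (Fin K) (Fin N) ℂ) (C : Matrix (Fin Q) (Fin N) ℂ)
    (S₁ S₂ : Matrix (Fin K) (Fin K) ℂ)
    (hherm : S₁ᴴ = S₁) (hS₁ : IsUnit S₁.det) (hsym : S₂ᵀ = S₂)
    (W P : Matrix (Fin K) (Fin K) ℂ)
    (hW : W = S₂ * (cconj S₁)⁻¹)
    (hP : P = cconj S₁ - S₂ᴴ * S₁⁻¹ * S₂)
    (hPinv : IsUnit P.det)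
    (G₁ G₂ : Matrix (Fin N) (Fin N) ℂ)
    (hG₁ : G₁ = (2 : ℂ) • (Dᴴ * (cconj P)⁻¹ * D))
    (hG₂ : G₂ = (-2 : ℂ) • (Dᴴ * (cconj P)⁻¹ * W * cconj D))
    (A : Matrix ((Fin N ⊕ Fin N) ⊕ (Fin Q ⊕ Fin Q)) ((Fin N ⊕ Fin N) ⊕ (Fin Q ⊕ Fin Q)) ℂ)
    (hA : A = Matrix.fromBlocks (aug G₁ G₂) (aug C 0)ᴴ (aug C 0) 0)
    (hAinv : IsUnit A.det) :
    A⁻¹.toBlocks₁₁ * aug G₁ G₂ * A⁻¹.toBlocks₁₁ = A⁻¹.toBlocks₁₁ := by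
  set G := aug G₁ G₂ with hG
  set Cb := aug C (0 : Matrix (Fin Q) (Fin N) ℂ) with hCb
  set F11 := A⁻¹.toBlocks₁₁ with hF11
  set F12 := A⁻¹.toBlocks₁₂ with hF12
  have hInv : A⁻¹ = Matrix.fromBlocks F11 F12 A⁻¹.toBlocks₂₁ A⁻¹.toBlocks₂₂ :=
    (Matrix.fromBlocks_toBlocks _).symm
  have h1 : A⁻¹ * A = 1 := Matrix.nonsing_inv_mul A hAinv
  have h2 : A * A⁻¹ = 1 := Matrix.mul_nonsing_inv A hAinv
  rw [hInv, hA, Matrix.fromBlocks_multiply, ← Matrix.fromBlocks_one] at h1 h2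
  have e1 : F11 * G + F12 * Cb = 1 := by
    simpa only [Matrix.toBlocks_fromBlocks₁₁] using congrArg Matrix.toBlocks₁₁ h1
  have e2 : Cb * F11 = 0 := by
    simpa only [Matrix.toBlocks_fromBlocks₂₁, Matrix.zero_mul, add_zero]
      using congrArg Matrix.toBlocks₂₁ h2
  have final : F11 * G * F11 + F12 * (Cb * F11) = F11 := by
    rw [← Matrix.mul_assoc F12, ← add_mul, e1, one_mul]
  simpa [e2, Matrix.mul_zero] using final
end

section
/- Assume A is invertible with inverse written in blocks A⁻¹ = [[F̄₁₁, F̄₁₂],[F̄₂₁, F̄₂₂]] where F̄₁₁ is 2N×2N. Let c ∈ ℂ^Q and let x ∈ ℂ^N satisfy C·x = c. Then F̄₁₁·J̄·D̄·x̄ + F̄₁₂·c̄ = x̄ (i.e., the maximum likelihood estimator is unbiased). -/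
open Matrix

/-- Unbiasedness of the maximum likelihood estimator: if `A` is invertible with inverse
blocks `F̄ᵢⱼ` and `C·x = c`, then `F̄₁₁·J̄·D̄·x̄ + F̄₁₂·c̄ = x̄`. -/
theorem ml_estimator_unbiased
    (N K Q : ℕ) (hN : 0 < N) (hK : 0 < K) (hQ : 0 < Q)
    (D : Matrix (Fin K) (Fin N) ℂ) (C : Matrix (Fin Q) (Fin N) ℂ)
    (S₁ S₂ : Matrix (Fin K) (Fin K) ℂ)
    (hherm : S₁ᴴ = S₁) (hS₁ : IsUnit S₁.det) (hsym : S₂ᵀ = S₂)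
    (W P : Matrix (Fin K) (Fin K) ℂ)
    (hW : W = S₂ * (cconj S₁)⁻¹)
    (hP : P = cconj S₁ - S₂ᴴ * S₁⁻¹ * S₂)
    (hPinv : IsUnit P.det)
    (G₁ G₂ : Matrix (Fin N) (Fin N) ℂ)
    (hG₁ : G₁ = (2 : ℂ) • (Dᴴ * (cconj P)⁻¹ * D))
    (hG₂ : G₂ = (-2 : ℂ) • (Dᴴ * (cconj P)⁻¹ * W * cconj D))
    (A : Matrix ((Fin N ⊕ Fin N) ⊕ (Fin Q ⊕ Fin Q)) ((Fin N ⊕ Fin N) ⊕ (Fin Q ⊕ Fin Q)) ℂ)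
    (hA : A = Matrix.fromBlocks (aug G₁ G₂) (aug C 0)ᴴ (aug C 0) 0)
    (hAinv : IsUnit A.det)
    (c : Fin Q → ℂ) (x : Fin N → ℂ)
    (hx : C.mulVec x = c) :
    (A⁻¹.toBlocks₁₁).mulVec
        ((aug ((2 : ℂ) • (Dᴴ * (cconj P)⁻¹)) ((-2 : ℂ) • (Dᴴ * (cconj P)⁻¹ * W))
          * aug D 0).mulVec (augVec x))
      + (A⁻¹.toBlocks₁₂).mulVec (augVec c) = augVec x := by
  -- Step 1: the product of augmented matrices is `aug G₁ G₂`.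
  have hcc0 : cconj (0 : Matrix (Fin K) (Fin N) ℂ) = 0 := by
    ext i j; simp [cconj]
  have hprod : (aug ((2 : ℂ) • (Dᴴ * (cconj P)⁻¹)) ((-2 : ℂ) • (Dᴴ * (cconj P)⁻¹ * W))
      * aug D 0) = aug G₁ G₂ := by
    unfold aug
    rw [Matrix.fromBlocks_multiply, hcc0, hG₁, hG₂]
    have hc1 : cconj ((-2 : ℂ) • (Dᴴ * (cconj P)⁻¹ * W * cconj D))
        = cconj ((-2 : ℂ) • (Dᴴ * (cconj P)⁻¹ * W)) * D := by
      ext i j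
      simp [cconj, Matrix.mul_apply, Matrix.smul_apply, map_sum, Finset.mul_sum,
        mul_comm, mul_left_comm]
    have hc2 : cconj ((2 : ℂ) • (Dᴴ * (cconj P)⁻¹ * D))
        = cconj ((2 : ℂ) • (Dᴴ * (cconj P)⁻¹)) * cconj D := by
      ext i j
      simp [cconj, Matrix.mul_apply, Matrix.smul_apply, map_sum, Finset.mul_sum,
        mul_comm, mul_left_comm]
    rw [hc1, hc2]
    simp [Matrix.smul_mul, mul_assoc]
  rw [hprod]
  -- Step 2: A applied to (x̄, 0) gives (Ḡ x̄, c̄).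
  set v : (Fin N ⊕ Fin N) ⊕ (Fin Q ⊕ Fin Q) → ℂ := Sum.elim (augVec x) 0 with hv
  have hCx : (aug C 0).mulVec (augVec x) = augVec c := by
    unfold aug augVec
    rw [Matrix.fromBlocks_mulVec]
    subst hx
    ext (i | i) <;>
      simp [cconj, Matrix.mulVec, dotProduct, map_sum]
  have h1 : A.mulVec v = Sum.elim ((aug G₁ G₂).mulVec (augVec x)) (augVec c) := by
    rw [hA, hv, Matrix.fromBlocks_mulVec]
    simp [hCx]
  have h2 : A⁻¹.mulVec (Sum.elim ((aug G₁ G₂).mulVec (augVec x)) (augVec c)) = v := by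
    rw [← h1, Matrix.mulVec_mulVec, Matrix.nonsing_inv_mul A hAinv, Matrix.one_mulVec]
  have h3 := h2
  rw [← Matrix.fromBlocks_toBlocks A⁻¹, Matrix.fromBlocks_mulVec] at h3
  funext i
  have h4 := congrFun h3 (Sum.inl i)
  simpa [hv] using h4
end

section
/- Assume A is invertible with inverse written in blocks A⁻¹ = [[F̄₁₁, F̄₁₂],[F̄₂₁, F̄₂₂]] where F̄₁₁ is 2N×2N. Then rank(C̄) = 2Q and rank(F̄₁₁) = 2N − 2Q. -/
open Matrix

/-- If `A = [[Ḡ, C̄ᴴ],[C̄, O]]` is invertible with inverse blocks `F̄ᵢⱼ`, then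
`rank(C̄) = 2Q` and `rank(F̄₁₁) = 2N − 2Q`. -/
theorem rank_Cbar_and_F11
    (N K Q : ℕ) (hN : 0 < N) (hK : 0 < K) (hQ : 0 < Q)
    (D : Matrix (Fin K) (Fin N) ℂ) (C : Matrix (Fin Q) (Fin N) ℂ)
    (S₁ S₂ : Matrix (Fin K) (Fin K) ℂ)
    (hherm : S₁ᴴ = S₁) (hS₁ : IsUnit S₁.det) (hsym : S₂ᵀ = S₂)
    (W P : Matrix (Fin K) (Fin K) ℂ)
    (hW : W = S₂ * (cconj S₁)⁻¹)
    (hP : P = cconj S₁ - S₂ᴴ * S₁⁻¹ * S₂)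
    (hPinv : IsUnit P.det)
    (G₁ G₂ : Matrix (Fin N) (Fin N) ℂ)
    (hG₁ : G₁ = (2 : ℂ) • (Dᴴ * (cconj P)⁻¹ * D))
    (hG₂ : G₂ = (-2 : ℂ) • (Dᴴ * (cconj P)⁻¹ * W * cconj D))
    (A : Matrix ((Fin N ⊕ Fin N) ⊕ (Fin Q ⊕ Fin Q)) ((Fin N ⊕ Fin N) ⊕ (Fin Q ⊕ Fin Q)) ℂ)
    (hA : A = Matrix.fromBlocks (aug G₁ G₂) (aug C 0)ᴴ (aug C 0) 0)
    (hAinv : IsUnit A.det) :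
    (aug C 0).rank = 2 * Q ∧ (A⁻¹.toBlocks₁₁).rank = 2 * N - 2 * Q := by
  have hBA : A⁻¹ * A = 1 := nonsing_inv_mul A hAinv
  have hAB : A * A⁻¹ = 1 := mul_nonsing_inv A hAinv
  set F11 := A⁻¹.toBlocks₁₁ with hF11
  set F12 := A⁻¹.toBlocks₁₂ with hF12
  set F21 := A⁻¹.toBlocks₂₁ with hF21
  set F22 := A⁻¹.toBlocks₂₂ with hF22
  have hBb : A⁻¹ = Matrix.fromBlocks F11 F12 F21 F22 := (Matrix.fromBlocks_toBlocks A⁻¹).symm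
  rw [hBb, hA] at hBA hAB
  rw [Matrix.fromBlocks_multiply, ← Matrix.fromBlocks_one] at hBA hAB
  rw [Matrix.fromBlocks_inj] at hBA hAB
  have e1 : F11 * aug G₁ G₂ + F12 * aug C 0 = 1 := hBA.1
  have e2 : aug C 0 * F11 = 0 := by
    have h := hAB.2.2.1
    simpa using h
  have e3 : aug C 0 * F12 = 1 := by
    have h := hAB.2.2.2
    simpa using h
  have hsurj : Function.Surjective (aug C 0).mulVecLin := by
    intro w
    refine ⟨F12.mulVec w, ?_⟩
    have : (aug C 0).mulVec (F12.mulVec w) = ((aug C 0) * F12).mulVec w := by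
      rw [Matrix.mulVec_mulVec]
    simpa [Matrix.mulVecLin_apply, this, e3] using rfl
  have hrangeC : LinearMap.range (aug C 0).mulVecLin = ⊤ := LinearMap.range_eq_top.2 hsurj
  have hrankC : (aug C 0).rank = 2 * Q := by
    rw [Matrix.rank, hrangeC, finrank_top]
    simp [Module.finrank_fintype_fun_eq_card]
    omega
  have hrange : LinearMap.range F11.mulVecLin = LinearMap.ker (aug C 0).mulVecLin := by
    apply le_antisymm
    · rintro x ⟨v, rfl⟩
      simp only [LinearMap.mem_ker, Matrix.mulVecLin_apply, Matrix.mulVec_mulVec, e2,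
        Matrix.zero_mulVec]
    · intro v hv
      have hv' : (aug C 0).mulVec v = 0 := hv
      refine ⟨(aug G₁ G₂).mulVec v, ?_⟩
      have h1 : F11.mulVec ((aug G₁ G₂).mulVec v) + F12.mulVec ((aug C 0).mulVec v) = v := by
        rw [Matrix.mulVec_mulVec, Matrix.mulVec_mulVec, ← Matrix.add_mulVec, e1,
          Matrix.one_mulVec]
      simpa [Matrix.mulVecLin_apply, hv'] using h1
  have hkernul := LinearMap.finrank_range_add_finrank_ker (aug C 0).mulVecLin
  have hdom : Module.finrank ℂ ((Fin N ⊕ Fin N) → ℂ) = 2 * N := by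
    simp [Module.finrank_fintype_fun_eq_card]
    omega
  have hrC : Module.finrank ℂ (LinearMap.range (aug C 0).mulVecLin) = 2 * Q := hrankC
  have hker : Module.finrank ℂ (LinearMap.ker (aug C 0).mulVecLin) = 2 * N - 2 * Q := by
    omega
  refine ⟨hrankC, ?_⟩
  rw [Matrix.rank, hrange, hker]
end
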